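/- arXiv:2310.17442 — 2 statements merged into one kernel-verified Lean document; each statement's English description precedes it below -/
import Mathlib

section
/- Let X be a finitely ramified fractal. Then there exists a metric on the underlying set of X which is undistorted with respect to the cell structure if and only if there exists a constant k ∈ ℕ satisfying the following two conditions: (1) every n-cell of X contains at least two disjoint (n+k)-cells; (2) no two disjoint n-cells of X both intersect a common (n+k)-cell. -/
/-!
If `d` is undistorted, diameters of nested cells decay geometrically, so for large `k` two
points of an `n`-cell at distance more than half its diameter lie in disjoint `(n+k)`-cells,
and an `(n+k)`-cell is too small to meet two disjoint `n`-cells, which are `δ`-separated.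

Conversely, let `level x y` be the deepest `n` at which `x` and `y` lie in intersecting
`n`-cells. Condition (2) shows that chaining three such relations loses at most `4k` levels, so
`b ^ level` with `b ^ (4k) = 1/2` satisfies Frink's four-point inequality and is comparable to a
genuine metric (`PseudoMetricSpace.ofPreNNDist`). In that metric `n`-cells have diameter at most
`b ^ n`, disjoint `n`-cells are `b ^ n / 4` apart by condition (2), and by condition (1) every
`n`-cell contains two disjoint `(n+k)`-cells, hence has diameter at least `b ^ n / 8`.
-/

open Set

/-- A finitely ramified cell structure on a topological space `X`: a locally finite,
level-indexed family of "cells", where each cell is compact, connected, with nonempty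
interior, the unique `0`-cell is all of `X`, every `(n+1)`-cell lies in some `n`-cell,
each `n`-cell is the union of the `(n+1)`-cells it contains, two distinct cells of the
same level meet in a finite set, and every infinite descending chain of cells
intersects in a single point. -/
structure CellStructure (X : Type*) [TopologicalSpace X] where
  cells : ℕ → Set (Set X)
  finite_cells : ∀ n, (cells n).Finite
  isCompact_cells : ∀ n, ∀ E ∈ cells n, IsCompact E
  isConnected_cells : ∀ n, ∀ E ∈ cells n, IsConnected E
  interior_nonempty : ∀ n, ∀ E ∈ cells n, (interior E).Nonempty
  root : cells 0 = {Set.univ}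
  exists_parent : ∀ n, ∀ E' ∈ cells (n + 1), ∃ E ∈ cells n, E' ⊆ E
  eq_sUnion_children : ∀ n, ∀ E ∈ cells n, E = ⋃₀ {E' | E' ∈ cells (n + 1) ∧ E' ⊆ E}
  inter_finite : ∀ n, ∀ E₁ ∈ cells n, ∀ E₂ ∈ cells n, E₁ ≠ E₂ → (E₁ ∩ E₂).Finite
  descending_singleton : ∀ E : ℕ → Set X, (∀ n, E n ∈ cells n) → (∀ n, E (n + 1) ⊆ E n) →
    ∃ p : X, (⋂ n, E n) = {p}

/-- `d` is a metric (distance function) on the set `X`. -/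
def IsMetricOn {X : Type*} (d : X → X → ℝ) : Prop :=
  (∀ x y, 0 ≤ d x y) ∧ (∀ x y, d x y = 0 ↔ x = y) ∧ (∀ x y, d x y = d y x) ∧
    ∀ x y z, d x z ≤ d x y + d y z

/-- The distance function `d` induces the given topology on `X`. -/
def InducesTopology {X : Type*} [TopologicalSpace X] (d : X → X → ℝ) : Prop :=
  ∀ s : Set X, IsOpen s ↔ ∀ x ∈ s, ∃ ε > 0, ∀ y, d x y < ε → y ∈ s

/-- The diameter of a set with respect to a distance function. -/
noncomputable def sdiam {X : Type*} (d : X → X → ℝ) (S : Set X) : ℝ :=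
  sSup (Set.image2 d S S)

/-- The distance between two sets with respect to a distance function. -/
noncomputable def sdist {X : Type*} (d : X → X → ℝ) (S T : Set X) : ℝ :=
  sInf (Set.image2 d S T)

/-- The distance function `d` is `(r,R,C,δ)`-undistorted with respect to the family
of cells `cells`: exponential decay of diameter ratios of intersecting cells, and
cell separation for disjoint cells of the same level. -/
def IsUndistortedWith {X : Type*} (cells : ℕ → Set (Set X)) (d : X → X → ℝ)
    (r R C δ : ℝ) : Prop :=
  0 < r ∧ r ≤ R ∧ R < 1 ∧ 1 ≤ C ∧ 0 < δ ∧
    (∀ m n : ℕ, m ≤ n → ∀ E ∈ cells m, ∀ E' ∈ cells n, (E ∩ E').Nonempty →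
      r ^ (n - m) / C ≤ sdiam d E' / sdiam d E ∧
        sdiam d E' / sdiam d E ≤ C * R ^ (n - m)) ∧
    ∀ n : ℕ, ∀ E₁ ∈ cells n, ∀ E₂ ∈ cells n, Disjoint E₁ E₂ →
      δ * sdiam d E₁ ≤ sdist d E₁ E₂

/-- `d` is undistorted if it is `(r,R,C,δ)`-undistorted for some constants. -/
def IsUndistorted {X : Type*} (cells : ℕ → Set (Set X)) (d : X → X → ℝ) : Prop :=
  ∃ r R C δ : ℝ, IsUndistortedWith cells d r R C δ

/-- `η` is a homeomorphism of `[0,∞)` onto itself (equivalently: a continuous,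
strictly increasing surjection of `[0,∞)` onto `[0,∞)` fixing `0`). -/
def IsQSGauge (η : ℝ → ℝ) : Prop :=
  ContinuousOn η (Set.Ici 0) ∧ StrictMonoOn η (Set.Ici 0) ∧ η 0 = 0 ∧
    Set.MapsTo η (Set.Ici 0) (Set.Ici 0) ∧ Set.SurjOn η (Set.Ici 0) (Set.Ici 0)

/-- The `η`-quasisymmetry inequality for a map `f` between sets carrying
distance functions `dX` and `dY`. -/
def QSIneq {X Y : Type*} (dX : X → X → ℝ) (dY : Y → Y → ℝ) (f : X → Y) (η : ℝ → ℝ) : Prop :=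
  ∀ a b c : X, a ≠ b → a ≠ c → b ≠ c →
    dY (f a) (f b) / dY (f a) (f c) ≤ η (dX a b / dX a c)

open Filter Topology NNReal

section SetDiameter

variable {X : Type*} {d : X → X → ℝ} {S T : Set X} {x y : X} {c : ℝ}

lemma le_sdiam (hS : BddAbove (image2 d S S)) (hx : x ∈ S) (hy : y ∈ S) : d x y ≤ sdiam d S :=
  le_csSup hS (mem_image2_of_mem hx hy)

lemma sdiam_le (hS : S.Nonempty) (h : ∀ x ∈ S, ∀ y ∈ S, d x y ≤ c) : sdiam d S ≤ c :=
  csSup_le (hS.image2 hS) (forall_mem_image2.2 h)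

lemma bddAbove_image2_of_sdiam_ne_zero (h : sdiam d S ≠ 0) : BddAbove (image2 d S S) := by
  by_contra hS
  exact h (Real.sSup_of_not_bddAbove hS)

lemma sdist_le (hd : ∀ x y, 0 ≤ d x y) (hx : x ∈ S) (hy : y ∈ T) : sdist d S T ≤ d x y :=
  csInf_le ⟨0, forall_mem_image2.2 fun x _ y _ => hd x y⟩ (mem_image2_of_mem hx hy)

lemma le_sdist (hS : S.Nonempty) (hT : T.Nonempty) (h : ∀ x ∈ S, ∀ y ∈ T, c ≤ d x y) :
    c ≤ sdist d S T :=
  le_csInf (hS.image2 hT) (forall_mem_image2.2 h)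

end SetDiameter

lemma isUndistortedWith_of_bounds {X : Type*} {cells : ℕ → Set (Set X)} {d : X → X → ℝ} {a : ℝ}
    (ha₀ : 0 < a) (ha₁ : a < 1)
    (hdiam : ∀ n, ∀ E ∈ cells n, a ^ n / 8 ≤ sdiam d E ∧ sdiam d E ≤ a ^ n)
    (hsep : ∀ n, ∀ E₁ ∈ cells n, ∀ E₂ ∈ cells n, Disjoint E₁ E₂ → a ^ n / 4 ≤ sdist d E₁ E₂) :
    IsUndistortedWith cells d a a 8 (1 / 4) := by
  refine ⟨ha₀, le_rfl, ha₁, by norm_num, by norm_num, fun m n hmn E hE E' hE' _ => ?_,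
    fun n E₁ hE₁ E₂ hE₂ hdisj => ?_⟩
  · obtain ⟨hE_lb, hE_ub⟩ := hdiam m E hE
    obtain ⟨hE'_lb, hE'_ub⟩ := hdiam n E' hE'
    have hpos : 0 < sdiam d E := lt_of_lt_of_le (by positivity) hE_lb
    have hpow : a ^ n = a ^ m * a ^ (n - m) := by rw [← pow_add, Nat.add_sub_cancel' hmn]
    have hpow_pos : 0 < a ^ (n - m) := pow_pos ha₀ _
    constructor
    · rw [le_div_iff₀ hpos]
      nlinarith
    · rw [div_le_iff₀ hpos]
      nlinarith
  · linarith [(hdiam n E₁ hE₁).2, hsep n E₁ hE₁ E₂ hE₂ hdisj]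

lemma exists_pow_eq_one_half {K : ℕ} (hK : K ≠ 0) : ∃ b : ℝ≥0, 0 < b ∧ b < 1 ∧ b ^ K = 1 / 2 := by
  refine ⟨(1 / 2) ^ (K⁻¹ : ℝ), by positivity, ?_, NNReal.rpow_inv_natCast_pow _ hK⟩
  rw [← pow_lt_one_iff_of_nonneg (by positivity) hK, NNReal.rpow_inv_natCast_pow _ hK]
  norm_num

lemma pow_div_two_le_pow {b : ℝ≥0} (hb₁ : b < 1) {K : ℕ} (hbK : b ^ K = 1 / 2) (n : ℕ)
    {j : ℕ} (hj : j ≤ K) : (b : ℝ) ^ n / 2 ≤ (b : ℝ) ^ (n + j) := by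
  have hhalf : (b : ℝ) ^ (n + K) = (b : ℝ) ^ n / 2 := by
    rw [pow_add, ← NNReal.coe_pow b K, hbK]
    push_cast
    ring
  exact hhalf ▸ pow_le_pow_of_le_one b.2 hb₁.le (by omega)

lemma exists_finite_chain_of_exists_parent {α : Type*} {T : ℕ → Set α} {R : α → α → Prop}
    (hpar : ∀ n, ∀ a ∈ T (n + 1), ∃ b ∈ T n, R b a) (m : ℕ) {a : α} (ha : a ∈ T m) :
    ∃ c : ℕ → α, c m = a ∧ (∀ i ≤ m, c i ∈ T i) ∧ ∀ i < m, R (c i) (c (i + 1)) := by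
  induction m generalizing a with
  | zero => exact ⟨fun _ => a, rfl, fun i hi => by simpa [Nat.le_zero.1 hi], by simp⟩
  | succ m ih =>
    obtain ⟨b, hb, hba⟩ := hpar m a ha
    obtain ⟨c, hcm, hcT, hcR⟩ := ih hb
    refine ⟨Function.update c (m + 1) a, by simp, fun i hi => ?_, fun i hi => ?_⟩
    · rcases hi.lt_or_eq with hi | rfl
      · simpa [hi.ne] using hcT i (by omega)
      · simpa using ha
    · rcases (Nat.lt_succ_iff.1 hi).lt_or_eq with hi | rfl
      · rw [Function.update_of_ne (by omega), Function.update_of_ne (by omega)]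
        exact hcR i hi
      · simpa [hcm] using hba

/-- Kőnig's lemma. The finite chains ending at level `m` converge along an ultrafilter. -/
theorem exists_seq_of_exists_parent {α : Type*} {T : ℕ → Set α} (hfin : ∀ n, (T n).Finite)
    (hne : ∀ n, (T n).Nonempty) {R : α → α → Prop}
    (hpar : ∀ n, ∀ a ∈ T (n + 1), ∃ b ∈ T n, R b a) :
    ∃ f : ℕ → α, (∀ n, f n ∈ T n) ∧ ∀ n, R (f n) (f (n + 1)) := by
  choose c _ hcT hcR using fun m => exists_finite_chain_of_exists_parent hpar m (hne m).some_mem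
  let U : Ultrafilter ℕ := Ultrafilter.of atTop
  have hU (n : ℕ) : ∀ᶠ m in (U : Filter ℕ), n < m :=
    Ultrafilter.of_le atTop (eventually_gt_atTop n)
  have hlim (n : ℕ) : ∃ a ∈ T n, ∀ᶠ m in (U : Filter ℕ), c m n = a := by
    have hmem : T n ∈ U.map (c · n) := (hU n).mono fun m hm => hcT m n hm.le
    obtain ⟨a, ha, hUa⟩ := Ultrafilter.eq_pure_of_finite_mem (hfin n) hmem
    exact ⟨a, ha, show {a} ∈ U.map (c · n) from hUa ▸ Ultrafilter.mem_pure.2 rfl⟩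
  choose f hfT hfU using hlim
  refine ⟨f, hfT, fun n => ?_⟩
  obtain ⟨m, hm, hmn, hmn'⟩ := ((hU n).and ((hfU n).and (hfU (n + 1)))).exists
  rw [← hmn, ← hmn']
  exact hcR m n hm

namespace CellStructure

variable {X : Type*} [TopologicalSpace X] (CS : CellStructure X)

lemma nonempty_of_mem_cells {n : ℕ} {E : Set X} (hE : E ∈ CS.cells n) : E.Nonempty :=
  (CS.interior_nonempty n E hE).mono interior_subset

lemma univ_mem_cells_zero : (univ : Set X) ∈ CS.cells 0 := by
  simp [CS.root]

lemma exists_subset_mem_cells_of_le {m n : ℕ} (hmn : m ≤ n) {E' : Set X} (hE' : E' ∈ CS.cells n) :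
    ∃ E ∈ CS.cells m, E' ⊆ E := by
  induction n, hmn using Nat.le_induction generalizing E' with
  | base => exact ⟨E', hE', subset_rfl⟩
  | succ n _ ih =>
    obtain ⟨F, hF, hE'F⟩ := CS.exists_parent n E' hE'
    obtain ⟨E, hE, hFE⟩ := ih hF
    exact ⟨E, hE, hE'F.trans hFE⟩

lemma exists_mem_cells_subset (j : ℕ) {n : ℕ} {E : Set X} (hE : E ∈ CS.cells n) {x : X}
    (hx : x ∈ E) : ∃ F ∈ CS.cells (n + j), x ∈ F ∧ F ⊆ E := by
  induction j with
  | zero => exact ⟨E, hE, hx, subset_rfl⟩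
  | succ j ih =>
    obtain ⟨F, hF, hxF, hFE⟩ := ih
    rw [CS.eq_sUnion_children _ F hF] at hxF
    obtain ⟨G, ⟨hG, hGF⟩, hxG⟩ := hxF
    exact ⟨G, hG, hxG, hGF.trans hFE⟩

def Near (n : ℕ) (x y : X) : Prop :=
  ∃ E ∈ CS.cells n, ∃ F ∈ CS.cells n, x ∈ E ∧ y ∈ F ∧ (E ∩ F).Nonempty

variable {CS}

lemma near_of_mem {n : ℕ} {E : Set X} (hE : E ∈ CS.cells n) {x y : X} (hx : x ∈ E) (hy : y ∈ E) :
    CS.Near n x y :=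
  ⟨E, hE, E, hE, hx, hy, ⟨x, hx, hx⟩⟩

lemma near_zero (x y : X) : CS.Near 0 x y :=
  near_of_mem CS.univ_mem_cells_zero (mem_univ x) (mem_univ y)

lemma near_self (n : ℕ) (x : X) : CS.Near n x x := by
  obtain ⟨E, hE, hx, -⟩ := CS.exists_mem_cells_subset n CS.univ_mem_cells_zero (mem_univ x)
  exact near_of_mem (zero_add n ▸ hE) hx hx

lemma Near.symm {n : ℕ} {x y : X} (h : CS.Near n x y) : CS.Near n y x := by
  obtain ⟨E, hE, F, hF, hx, hy, hEF⟩ := h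
  exact ⟨F, hF, E, hE, hy, hx, inter_comm E F ▸ hEF⟩

lemma Near.mono {m n : ℕ} (hmn : m ≤ n) {x y : X} (h : CS.Near n x y) : CS.Near m x y := by
  obtain ⟨E, hE, F, hF, hx, hy, hEF⟩ := h
  obtain ⟨E₀, hE₀, hEE₀⟩ := CS.exists_subset_mem_cells_of_le hmn hE
  obtain ⟨F₀, hF₀, hFF₀⟩ := CS.exists_subset_mem_cells_of_le hmn hF
  exact ⟨E₀, hE₀, F₀, hF₀, hEE₀ hx, hFF₀ hy, hEF.mono (inter_subset_inter hEE₀ hFF₀)⟩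

/-- Follow, by Kőnig's lemma, two descending chains of intersecting cells around `x` and `y`:
their intersections are `{x}` and `{y}`, and by compactness they share a point. -/
lemma eq_of_forall_near [T2Space X] {x y : X} (h : ∀ n, CS.Near n x y) : x = y := by
  let T : ℕ → Set (Set X × Set X) := fun n =>
    {p | p.1 ∈ CS.cells n ∧ p.2 ∈ CS.cells n ∧ x ∈ p.1 ∧ y ∈ p.2 ∧ (p.1 ∩ p.2).Nonempty}
  have hfin : ∀ n, (T n).Finite := fun n =>
    ((CS.finite_cells n).prod (CS.finite_cells n)).subset fun p hp => ⟨hp.1, hp.2.1⟩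
  have hne : ∀ n, (T n).Nonempty := fun n => by
    obtain ⟨E, hE, F, hF, hx, hy, hEF⟩ := h n
    exact ⟨(E, F), hE, hF, hx, hy, hEF⟩
  obtain ⟨f, hfT, hf⟩ := exists_seq_of_exists_parent (T := T) hfin hne
    (R := fun p q => q.1 ⊆ p.1 ∧ q.2 ⊆ p.2) (by
      rintro n ⟨E, F⟩ ⟨hE, hF, hx, hy, hEF⟩
      obtain ⟨E₀, hE₀, hEE₀⟩ := CS.exists_parent n E hE
      obtain ⟨F₀, hF₀, hFF₀⟩ := CS.exists_parent n F hF
      exact ⟨(E₀, F₀), ⟨hE₀, hF₀, hEE₀ hx, hFF₀ hy, hEF.mono (inter_subset_inter hEE₀ hFF₀)⟩,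
        hEE₀, hFF₀⟩)
  obtain ⟨p, hp⟩ := CS.descending_singleton (fun n => (f n).1) (fun n => (hfT n).1)
    fun n => (hf n).1
  obtain ⟨q, hq⟩ := CS.descending_singleton (fun n => (f n).2) (fun n => (hfT n).2.1)
    fun n => (hf n).2
  have hcompact : ∀ n, IsCompact ((f n).1 ∩ (f n).2) := fun n =>
    (CS.isCompact_cells n _ (hfT n).1).inter_right (CS.isCompact_cells n _ (hfT n).2.1).isClosed
  obtain ⟨z, hz⟩ := IsCompact.nonempty_iInter_of_sequence_nonempty_isCompact_isClosed
    (fun n => (f n).1 ∩ (f n).2) (fun n => inter_subset_inter (hf n).1 (hf n).2)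
    (fun n => (hfT n).2.2.2.2) (hcompact 0) fun n => (hcompact n).isClosed
  have eq_of_forall_mem {s : ℕ → Set X} {w u : X} (hs : ⋂ n, s n = {w}) (hu : ∀ n, u ∈ s n) :
      u = w := by
    simpa [hs] using mem_iInter.2 hu
  calc x = p := eq_of_forall_mem hp fun n => (hfT n).2.2.1
    _ = z := (eq_of_forall_mem hp fun n => (mem_iInter.1 hz n).1).symm
    _ = q := eq_of_forall_mem hq fun n => (mem_iInter.1 hz n).2
    _ = y := (eq_of_forall_mem hq fun n => (hfT n).2.2.2.1).symm

def HasDisjointSubcells (CS : CellStructure X) (k : ℕ) : Prop :=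
  ∀ n : ℕ, ∀ E ∈ CS.cells n, ∃ E₁ ∈ CS.cells (n + k), ∃ E₂ ∈ CS.cells (n + k),
    E₁ ⊆ E ∧ E₂ ⊆ E ∧ E₁ ≠ E₂ ∧ Disjoint E₁ E₂

def NoBridgingCells (CS : CellStructure X) (k : ℕ) : Prop :=
  ∀ n : ℕ, ∀ E₁ ∈ CS.cells n, ∀ E₂ ∈ CS.cells n, Disjoint E₁ E₂ →
    ∀ F ∈ CS.cells (n + k), ¬((E₁ ∩ F).Nonempty ∧ (E₂ ∩ F).Nonempty)

variable {CS : CellStructure X} {k : ℕ}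

lemma HasDisjointSubcells.succ (h : CS.HasDisjointSubcells k) : CS.HasDisjointSubcells (k + 1) := by
  intro n E hE
  obtain ⟨E₁, hE₁, E₂, hE₂, hE₁E, hE₂E, -, hdisj⟩ := h n E hE
  obtain ⟨x, hx⟩ := CS.nonempty_of_mem_cells hE₁
  obtain ⟨y, hy⟩ := CS.nonempty_of_mem_cells hE₂
  obtain ⟨F₁, hF₁, hxF₁, hF₁E₁⟩ := CS.exists_mem_cells_subset 1 hE₁ hx
  obtain ⟨F₂, hF₂, -, hF₂E₂⟩ := CS.exists_mem_cells_subset 1 hE₂ hy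
  have hdisj' : Disjoint F₁ F₂ := hdisj.mono hF₁E₁ hF₂E₂
  refine ⟨F₁, hF₁, F₂, hF₂, hF₁E₁.trans hE₁E, hF₂E₂.trans hE₂E, ?_, hdisj'⟩
  rintro rfl
  exact disjoint_left.1 hdisj' hxF₁ hxF₁

lemma NoBridgingCells.succ (h : CS.NoBridgingCells k) : CS.NoBridgingCells (k + 1) := by
  rintro n E₁ hE₁ E₂ hE₂ hdisj F hF ⟨hE₁F, hE₂F⟩
  obtain ⟨F₀, hF₀, hFF₀⟩ := CS.exists_parent (n + k) F hF
  exact h n E₁ hE₁ E₂ hE₂ hdisj F₀ hF₀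
    ⟨hE₁F.mono (inter_subset_inter_right _ hFF₀), hE₂F.mono (inter_subset_inter_right _ hFF₀)⟩

lemma NoBridgingCells.inter_nonempty (h : CS.NoBridgingCells k) {n : ℕ} {P Q F : Set X}
    (hP : P ∈ CS.cells n) (hQ : Q ∈ CS.cells n) (hF : F ∈ CS.cells (n + k))
    (hPF : (P ∩ F).Nonempty) (hQF : (Q ∩ F).Nonempty) : (P ∩ Q).Nonempty :=
  not_disjoint_iff_nonempty_inter.1 fun hPQ => h n P hP Q hQ hPQ F hF ⟨hPF, hQF⟩

lemma NoBridgingCells.not_near (h : CS.NoBridgingCells k) {n : ℕ} {E₁ E₂ : Set X}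
    (hE₁ : E₁ ∈ CS.cells n) (hE₂ : E₂ ∈ CS.cells n) (hdisj : Disjoint E₁ E₂)
    {x y : X} (hx : x ∈ E₁) (hy : y ∈ E₂) : ¬CS.Near (n + k + k) x y := by
  rintro ⟨G, hG, H, hH, hxG, hyH, hGH⟩
  obtain ⟨G₀, hG₀, hGG₀⟩ := CS.exists_subset_mem_cells_of_le (Nat.le_add_right (n + k) k) hG
  obtain ⟨Y, hY, hyY, hYE₂⟩ := CS.exists_mem_cells_subset k hE₂ hy
  have hYG₀ : (Y ∩ G₀).Nonempty :=
    h.inter_nonempty hY hG₀ hH ⟨y, hyY, hyH⟩ (hGH.mono (inter_subset_inter_left _ hGG₀))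
  exact h n E₁ hE₁ E₂ hE₂ hdisj G₀ hG₀
    ⟨⟨x, hx, hGG₀ hxG⟩, hYG₀.mono (inter_subset_inter_left _ hYE₂)⟩

lemma NoBridgingCells.near_trans (h : CS.NoBridgingCells k) {n : ℕ} {x y z : X}
    (hxy : CS.Near (n + k + k) x y) (hyz : CS.Near (n + k + k) y z) : CS.Near n x z := by
  obtain ⟨A₁, hA₁, A₂, hA₂, hxA₁, hyA₂, hA⟩ := hxy
  obtain ⟨B₁, hB₁, B₂, hB₂, hyB₁, hzB₂, hB⟩ := hyz
  have hk : n + k ≤ n + k + k := Nat.le_add_right _ k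
  obtain ⟨P, hP, hA₁P⟩ := CS.exists_subset_mem_cells_of_le hk hA₁
  obtain ⟨Q, hQ, hB₁Q⟩ := CS.exists_subset_mem_cells_of_le hk hB₁
  obtain ⟨W, hW, hB₂W⟩ := CS.exists_subset_mem_cells_of_le hk hB₂
  have hPQ : (P ∩ Q).Nonempty :=
    h.inter_nonempty hP hQ hA₂ (hA.mono (inter_subset_inter_left _ hA₁P)) ⟨y, hB₁Q hyB₁, hyA₂⟩
  have hWQ : (W ∩ Q).Nonempty := inter_comm Q W ▸ hB.mono (inter_subset_inter hB₁Q hB₂W)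
  obtain ⟨H₁, hH₁, hPH₁⟩ := CS.exists_subset_mem_cells_of_le (Nat.le_add_right n k) hP
  obtain ⟨H₂, hH₂, hWH₂⟩ := CS.exists_subset_mem_cells_of_le (Nat.le_add_right n k) hW
  exact ⟨H₁, hH₁, H₂, hH₂, hPH₁ (hA₁P hxA₁), hWH₂ (hB₂W hzB₂), h.inter_nonempty hH₁ hH₂ hQ
    (hPQ.mono (inter_subset_inter_left _ hPH₁)) (hWQ.mono (inter_subset_inter_left _ hWH₂))⟩

lemma NoBridgingCells.near_of_near₃ (h : CS.NoBridgingCells k) {n : ℕ} {x₁ x₂ x₃ x₄ : X}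
    (h₁₂ : CS.Near (n + 4 * k) x₁ x₂) (h₂₃ : CS.Near (n + 4 * k) x₂ x₃)
    (h₃₄ : CS.Near (n + 4 * k) x₃ x₄) : CS.Near n x₁ x₄ := by
  have hlevel : n + 4 * k = n + k + k + k + k := by ring
  rw [hlevel] at h₁₂ h₂₃ h₃₄
  exact h.near_trans (h.near_trans h₁₂ h₂₃) (h₃₄.mono (by omega))

variable (CS)

/-- Junk value `0` when `x = y`, which is near at every level. -/
noncomputable def level (x y : X) : ℕ :=
  sSup {m | CS.Near m x y}

open Classical in
noncomputable def quasidist (b : ℝ≥0) (x y : X) : ℝ≥0 :=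
  if x = y then 0 else b ^ CS.level x y

variable {CS}

lemma level_comm (x y : X) : CS.level x y = CS.level y x := by
  simp only [level]
  congr 1
  ext m
  exact ⟨Near.symm, Near.symm⟩

lemma quasidist_self (b : ℝ≥0) (x : X) : CS.quasidist b x x = 0 :=
  if_pos rfl

lemma quasidist_comm (b : ℝ≥0) (x y : X) : CS.quasidist b x y = CS.quasidist b y x := by
  by_cases hxy : x = y
  · rw [hxy]
  · rw [quasidist, quasidist, if_neg hxy, if_neg (Ne.symm hxy), level_comm]

lemma eq_of_quasidist_eq_zero {b : ℝ≥0} (hb : 0 < b) {x y : X} (h : CS.quasidist b x y = 0) :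
    x = y := by
  by_contra hxy
  rw [quasidist, if_neg hxy] at h
  exact (pow_pos hb _).ne' h

variable (CS) in
noncomputable def cellDist (b : ℝ≥0) (x y : X) : ℝ :=
  letI := PseudoMetricSpace.ofPreNNDist (CS.quasidist b) (quasidist_self b) (quasidist_comm b)
  dist x y

lemma cellDist_le_quasidist (b : ℝ≥0) (x y : X) : CS.cellDist b x y ≤ CS.quasidist b x y :=
  PseudoMetricSpace.dist_ofPreNNDist_le _ _ _ x y

variable [T2Space X]

lemma bddAbove_near {x y : X} (hxy : x ≠ y) : BddAbove {m | CS.Near m x y} := by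
  by_contra hunb
  refine hxy (CS.eq_of_forall_near fun n => ?_)
  obtain ⟨m, hm, hnm⟩ := not_bddAbove_iff.1 hunb n
  exact hm.mono hnm.le

lemma near_level {x y : X} (hxy : x ≠ y) : CS.Near (CS.level x y) x y :=
  Nat.sSup_mem ⟨0, near_zero x y⟩ (bddAbove_near hxy)

lemma le_level {x y : X} (hxy : x ≠ y) {m : ℕ} (h : CS.Near m x y) : m ≤ CS.level x y :=
  le_csSup (bddAbove_near hxy) h

section Metric

variable {b : ℝ≥0} (hb₀ : 0 < b) (hb₁ : b < 1) (hbk : b ^ (4 * k) = 1 / 2)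
include hb₀ hb₁

lemma quasidist_le_pow_iff {x y : X} {m : ℕ} : CS.quasidist b x y ≤ b ^ m ↔ CS.Near m x y := by
  by_cases hxy : x = y
  · simp [hxy, quasidist_self, near_self]
  · rw [quasidist, if_neg hxy, pow_le_pow_iff_right_of_lt_one₀ hb₀ hb₁]
    exact ⟨fun h => (near_level hxy).mono h, le_level hxy⟩

lemma near_succ_of_quasidist_lt_pow {x y : X} {m : ℕ} (h : CS.quasidist b x y < b ^ m) :
    CS.Near (m + 1) x y := by
  by_cases hxy : x = y
  · rw [hxy]
    exact near_self _ y
  · rw [quasidist, if_neg hxy, pow_lt_pow_iff_right_of_lt_one₀ hb₀ hb₁] at h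
    exact (near_level hxy).mono h

include hbk in
/-- The four-point inequality of Frink's metrization lemma, with `b ^ (4k) = 1/2` absorbing the
`4k` levels lost in `NoBridgingCells.near_of_near₃`. -/
lemma quasidist_le_two_mul_max (h : CS.NoBridgingCells k) (x₁ x₂ x₃ x₄ : X) : CS.quasidist b x₁ x₄ ≤
      2 * max (CS.quasidist b x₁ x₂) (max (CS.quasidist b x₂ x₃) (CS.quasidist b x₃ x₄)) := by
  set M := max (CS.quasidist b x₁ x₂) (max (CS.quasidist b x₂ x₃) (CS.quasidist b x₃ x₄))
  by_cases h₁₄ : x₁ = x₄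
  · simp [h₁₄, quasidist_self]
  by_contra! hlt
  set L := CS.level x₁ x₄
  rw [quasidist, if_neg h₁₄] at hlt
  have hM : M < b ^ (L + 4 * k) := by
    rw [pow_add, hbk, mul_one_div, lt_div_iff₀ two_pos, mul_comm]
    exact hlt
  have hnear {u v : X} (huv : CS.quasidist b u v ≤ M) : CS.Near (L + 1 + 4 * k) u v := by
    rw [add_right_comm]
    exact near_succ_of_quasidist_lt_pow hb₀ hb₁ (huv.trans_lt hM)
  have hL : L + 1 ≤ L := le_level h₁₄ <| h.near_of_near₃ (hnear (le_max_left _ _))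
    (hnear ((le_max_left _ _).trans (le_max_right _ _)))
    (hnear ((le_max_right _ _).trans (le_max_right _ _)))
  omega

include hbk in
lemma quasidist_le_two_mul_cellDist (h : CS.NoBridgingCells k) (x y : X) :
    (CS.quasidist b x y : ℝ) ≤ 2 * CS.cellDist b x y :=
  PseudoMetricSpace.le_two_mul_dist_ofPreNNDist _ _ _
    (quasidist_le_two_mul_max hb₀ hb₁ hbk h) x y

include hbk in
lemma isMetricOn_cellDist (h : CS.NoBridgingCells k) : IsMetricOn (CS.cellDist b) := by
  let := PseudoMetricSpace.ofPreNNDist (CS.quasidist b) (quasidist_self b) (quasidist_comm b)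
  refine ⟨fun x y => dist_nonneg, fun x y => ⟨fun hxy => eq_of_quasidist_eq_zero (CS := CS) hb₀ ?_,
    fun hxy => ?_⟩, fun x y => dist_comm x y, fun x y z => dist_triangle x y z⟩
  · have := quasidist_le_two_mul_cellDist hb₀ hb₁ hbk h x y
    rw [hxy, mul_zero] at this
    exact_mod_cast le_antisymm this (CS.quasidist b x y).2
  · rw [hxy]
    exact dist_self y

lemma cellDist_le_pow_of_mem {n : ℕ} {E : Set X} (hE : E ∈ CS.cells n) {x y : X}
    (hx : x ∈ E) (hy : y ∈ E) : CS.cellDist b x y ≤ (b : ℝ) ^ n := by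
  refine (cellDist_le_quasidist b x y).trans ?_
  exact_mod_cast (quasidist_le_pow_iff hb₀ hb₁).2 (near_of_mem hE hx hy)

include hbk in
lemma pow_div_four_le_cellDist (h : CS.NoBridgingCells k) {n : ℕ} {E₁ E₂ : Set X}
    (hE₁ : E₁ ∈ CS.cells n) (hE₂ : E₂ ∈ CS.cells n) (hdisj : Disjoint E₁ E₂)
    {x y : X} (hx : x ∈ E₁) (hy : y ∈ E₂) : (b : ℝ) ^ n / 4 ≤ CS.cellDist b x y := by
  have hlt : (b : ℝ) ^ (n + (k + k)) < CS.quasidist b x y := by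
    rw [← add_assoc]
    exact_mod_cast not_le.1 fun hle =>
      h.not_near hE₁ hE₂ hdisj hx hy ((quasidist_le_pow_iff hb₀ hb₁).1 hle)
  linarith [pow_div_two_le_pow hb₁ hbk n (show k + k ≤ 4 * k by omega),
    quasidist_le_two_mul_cellDist hb₀ hb₁ hbk h x y]

lemma sdiam_cellDist_le {n : ℕ} {E : Set X} (hE : E ∈ CS.cells n) :
    sdiam (CS.cellDist b) E ≤ (b : ℝ) ^ n :=
  sdiam_le (CS.nonempty_of_mem_cells hE) fun _ hx _ hy => cellDist_le_pow_of_mem hb₀ hb₁ hE hx hy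

include hbk in
lemma pow_div_eight_le_sdiam_cellDist (h₁ : CS.HasDisjointSubcells k) (h₂ : CS.NoBridgingCells k)
    {n : ℕ} {E : Set X} (hE : E ∈ CS.cells n) : (b : ℝ) ^ n / 8 ≤ sdiam (CS.cellDist b) E := by
  obtain ⟨E₁, hE₁, E₂, hE₂, hE₁E, hE₂E, -, hdisj⟩ := h₁ n E hE
  obtain ⟨x, hx⟩ := CS.nonempty_of_mem_cells hE₁
  obtain ⟨y, hy⟩ := CS.nonempty_of_mem_cells hE₂
  have hbdd : BddAbove (image2 (CS.cellDist b) E E) :=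
    ⟨_, forall_mem_image2.2 fun _ hx _ hy => cellDist_le_pow_of_mem hb₀ hb₁ hE hx hy⟩
  linarith [pow_div_two_le_pow hb₁ hbk n (show k ≤ 4 * k by omega),
    pow_div_four_le_cellDist hb₀ hb₁ hbk h₂ hE₁ hE₂ hdisj hx hy,
    le_sdiam hbdd (hE₁E hx) (hE₂E hy)]

include hbk in
lemma pow_div_four_le_sdist_cellDist (h : CS.NoBridgingCells k) {n : ℕ} {E₁ E₂ : Set X}
    (hE₁ : E₁ ∈ CS.cells n) (hE₂ : E₂ ∈ CS.cells n) (hdisj : Disjoint E₁ E₂) :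
    (b : ℝ) ^ n / 4 ≤ sdist (CS.cellDist b) E₁ E₂ :=
  le_sdist (CS.nonempty_of_mem_cells hE₁) (CS.nonempty_of_mem_cells hE₂) fun _ hx _ hy =>
    pow_div_four_le_cellDist hb₀ hb₁ hbk h hE₁ hE₂ hdisj hx hy

end Metric

end CellStructure

theorem CellStructure.exists_isUndistorted_of_conditions {X : Type*} [TopologicalSpace X]
    [T2Space X] {CS : CellStructure X} {k : ℕ} (hk : k ≠ 0) (h₁ : CS.HasDisjointSubcells k)
    (h₂ : CS.NoBridgingCells k) : ∃ d : X → X → ℝ, IsMetricOn d ∧ IsUndistorted CS.cells d := by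
  obtain ⟨b, hb₀, hb₁, hbk⟩ := exists_pow_eq_one_half (show 4 * k ≠ 0 by omega)
  refine ⟨CS.cellDist b, isMetricOn_cellDist hb₀ hb₁ hbk h₂, b, b, 8, 1 / 4,
    isUndistortedWith_of_bounds hb₀ hb₁ (fun n E hE => ⟨?_, ?_⟩) fun n E₁ hE₁ E₂ hE₂ hdisj => ?_⟩
  · exact pow_div_eight_le_sdiam_cellDist hb₀ hb₁ hbk h₁ h₂ hE
  · exact sdiam_cellDist_le hb₀ hb₁ hE
  · exact pow_div_four_le_sdist_cellDist hb₀ hb₁ hbk h₂ hE₁ hE₂ hdisj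

namespace IsUndistortedWith

variable {X : Type*} [TopologicalSpace X] {CS : CellStructure X} {d : X → X → ℝ} {r R C δ : ℝ}
  (hd : IsMetricOn d) (hund : IsUndistortedWith CS.cells d r R C δ)
include hd hund

lemma sdiam_pos {n : ℕ} {E : Set X} (hE : E ∈ CS.cells n) : 0 < sdiam d E := by
  obtain ⟨hr, -, -, hC, -, hdecay, -⟩ := hund
  obtain ⟨x, hx⟩ := CS.nonempty_of_mem_cells hE
  have hratio := (hdecay n n le_rfl E hE E hE ⟨x, hx, hx⟩).1
  have hne : sdiam d E ≠ 0 := fun h0 => by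
    rw [h0, div_zero] at hratio
    have : 0 < r ^ (n - n) / C := by positivity
    linarith
  refine lt_of_le_of_ne ?_ hne.symm
  simpa [(hd.2.1 x x).2 rfl] using le_sdiam (bddAbove_image2_of_sdiam_ne_zero hne) hx hx

lemma bddAbove_image2 {n : ℕ} {E : Set X} (hE : E ∈ CS.cells n) : BddAbove (image2 d E E) :=
  bddAbove_image2_of_sdiam_ne_zero (hund.sdiam_pos hd hE).ne'

lemma sdiam_le_mul_sdiam {n j : ℕ} {E F : Set X} (hE : E ∈ CS.cells n)
    (hF : F ∈ CS.cells (n + j)) (hEF : (E ∩ F).Nonempty) : sdiam d F ≤ C * R ^ j * sdiam d E := by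
  have h := (hund.2.2.2.2.2.1 n (n + j) (Nat.le_add_right n j) E hE F hF hEF).2
  rwa [Nat.add_sub_cancel_left, div_le_iff₀ (hund.sdiam_pos hd hE)] at h

omit hd in
lemma exists_mul_pow_lt {ε : ℝ} (hε : 0 < ε) : ∃ k : ℕ, C * R ^ k < ε := by
  obtain ⟨hr, hrR, hR, hC, -⟩ := hund
  have hlim : Tendsto (fun k : ℕ => C * R ^ k) atTop (𝓝 (C * 0)) :=
    (tendsto_pow_atTop_nhds_zero_of_lt_one (hr.le.trans hrR) hR).const_mul C
  rw [mul_zero] at hlim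
  exact (hlim.eventually (gt_mem_nhds hε)).exists

lemma hasDisjointSubcells {k : ℕ} (hk : C * R ^ k < 1 / 4) : CS.HasDisjointSubcells k := by
  intro n E hE
  have hpos := hund.sdiam_pos hd hE
  have hne := CS.nonempty_of_mem_cells hE
  obtain ⟨-, ⟨x, hx, y, hy, rfl⟩, hxy⟩ := exists_lt_of_lt_csSup (hne.image2 hne) (half_lt_self hpos)
  obtain ⟨F₁, hF₁, hxF₁, hF₁E⟩ := CS.exists_mem_cells_subset k hE hx
  obtain ⟨F₂, hF₂, hyF₂, hF₂E⟩ := CS.exists_mem_cells_subset k hE hy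
  have hdisj : Disjoint F₁ F₂ := disjoint_left.2 fun w hw₁ hw₂ => by
    have h₁ := le_sdiam (hund.bddAbove_image2 hd hF₁) hxF₁ hw₁
    have h₂ := le_sdiam (hund.bddAbove_image2 hd hF₂) hw₂ hyF₂
    have h₁' := hund.sdiam_le_mul_sdiam hd hE hF₁ ⟨x, hx, hxF₁⟩
    have h₂' := hund.sdiam_le_mul_sdiam hd hE hF₂ ⟨y, hy, hyF₂⟩
    change sdiam d E / 2 < d x y at hxy
    linarith [hd.2.2.2 x w y, mul_lt_mul_of_pos_right hk hpos]
  exact ⟨F₁, hF₁, F₂, hF₂, hF₁E, hF₂E, fun h => disjoint_left.1 hdisj hxF₁ (h ▸ hxF₁), hdisj⟩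

lemma noBridgingCells {k : ℕ} (hk : C * R ^ k < δ) : CS.NoBridgingCells k := by
  rintro n E₁ hE₁ E₂ hE₂ hdisj F hF ⟨⟨x, hx, hxF⟩, ⟨y, hy, hyF⟩⟩
  have hsep := hund.2.2.2.2.2.2 n E₁ hE₁ E₂ hE₂ hdisj
  have hdist := sdist_le hd.1 hx hy
  have hdiamF := le_sdiam (hund.bddAbove_image2 hd hF) hxF hyF
  have hshrink := hund.sdiam_le_mul_sdiam hd hE₁ hF ⟨x, hx, hxF⟩
  linarith [mul_lt_mul_of_pos_right hk (hund.sdiam_pos hd hE₁)]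

end IsUndistortedWith

theorem stmt5_general {X : Type*} [TopologicalSpace X]
    [TopologicalSpace.MetrizableSpace X] (CS : CellStructure X) :
    (∃ d : X → X → ℝ, IsMetricOn d ∧ IsUndistorted CS.cells d) ↔
      ∃ k : ℕ,
        (∀ n : ℕ, ∀ E ∈ CS.cells n, ∃ E₁ ∈ CS.cells (n + k), ∃ E₂ ∈ CS.cells (n + k),
          E₁ ⊆ E ∧ E₂ ⊆ E ∧ E₁ ≠ E₂ ∧ Disjoint E₁ E₂) ∧
        (∀ n : ℕ, ∀ E₁ ∈ CS.cells n, ∀ E₂ ∈ CS.cells n, Disjoint E₁ E₂ →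
          ∀ F ∈ CS.cells (n + k), ¬((E₁ ∩ F).Nonempty ∧ (E₂ ∩ F).Nonempty)) := by
  constructor
  · rintro ⟨d, hd, r, R, C, δ, hund⟩
    have hδ : 0 < δ := hund.2.2.2.2.1
    obtain ⟨k, hk⟩ := hund.exists_mul_pow_lt (lt_min hδ (by norm_num : (0 : ℝ) < 1 / 4))
    exact ⟨k, hund.hasDisjointSubcells hd (hk.trans_le (min_le_right _ _)),
      hund.noBridgingCells hd (hk.trans_le (min_le_left _ _))⟩
  · rintro ⟨k, h₁, h₂⟩
    exact CellStructure.exists_isUndistorted_of_conditions k.succ_ne_zero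
      (CellStructure.HasDisjointSubcells.succ h₁) (CellStructure.NoBridgingCells.succ h₂)

/-- A finitely ramified fractal `X` admits an undistorted metric
(on its underlying set) if and only if there is `k ∈ ℕ` such that every `n`-cell
contains two disjoint `(n+k)`-cells and no two disjoint `n`-cells meet a common
`(n+k)`-cell. -/
theorem stmt5 {X : Type*} [TopologicalSpace X] [CompactSpace X] [ConnectedSpace X]
    [TopologicalSpace.MetrizableSpace X] (CS : CellStructure X) :
    (∃ d : X → X → ℝ, IsMetricOn d ∧ IsUndistorted CS.cells d) ↔
      ∃ k : ℕ,
        (∀ n : ℕ, ∀ E ∈ CS.cells n, ∃ E₁ ∈ CS.cells (n + k), ∃ E₂ ∈ CS.cells (n + k),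
          E₁ ⊆ E ∧ E₂ ⊆ E ∧ E₁ ≠ E₂ ∧ Disjoint E₁ E₂) ∧
        (∀ n : ℕ, ∀ E₁ ∈ CS.cells n, ∀ E₂ ∈ CS.cells n, Disjoint E₁ E₂ →
          ∀ F ∈ CS.cells (n + k), ¬((E₁ ∩ F).Nonempty ∧ (E₂ ∩ F).Nonempty)) :=
  stmt5_general CS
end

section
/- Let X be a finitely ramified fractal and k ∈ ℕ such that, for every n, no two disjoint n-cells of X both intersect a common (n+k)-cell. Let α be a real number with 1 < α ≤ (3/2)^{1/k}. Then the function d_α defined by d_α(p,q) = inf { Σ_{i=1}^{l} α^{−|E_i|} : E_1,…,E_l is a cell chain connecting p and q } is a metric on X, and for every pair of distinct points p, q ∈ X one has d_α(p,q) ≥ α^{1−P(p,q)−k}, where P(p,q) denotes the least integer n such that p and q are not contained in any intersecting pair of n-cells (E_x, E_y) with p ∈ E_x and q ∈ E_y (such an n exists by the cell structure axioms). -/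
open Set

/-- The weight `Σ α^{-|E_i|}` of a chain of cells, each recorded with its level. -/
noncomputable def chainWeight {X : Type*} (α : ℝ) (c : List (ℕ × Set X)) : ℝ :=
  (c.map fun e => α ^ (-(e.1 : ℤ))).sum

/-- `c` is a cell chain connecting `p` to `q`: a nonempty finite sequence of cells
(recorded with their levels) with `p` in the first cell, `q` in the last one, and
consecutive cells intersecting. -/
def IsCellChain {X : Type*} [TopologicalSpace X] (CS : CellStructure X) (p q : X)
    (c : List (ℕ × Set X)) : Prop :=
  c ≠ [] ∧ (∀ e ∈ c, e.2 ∈ CS.cells e.1) ∧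
    (∃ e, c.head? = some e ∧ p ∈ e.2) ∧ (∃ e, c.getLast? = some e ∧ q ∈ e.2) ∧
    List.Chain' (fun e f => (e.2 ∩ f.2).Nonempty) c

/-- The distance function `d_α(p,q) = inf { Σ α^{-|E_i|} }` over all cell chains
connecting `p` and `q`. -/
noncomputable def dAlpha {X : Type*} [TopologicalSpace X] (CS : CellStructure X)
    (α : ℝ) (p q : X) : ℝ :=
  sInf {s : ℝ | ∃ c : List (ℕ × Set X), IsCellChain CS p q c ∧ chainWeight α c = s}

/-- No intersecting pair of `n`-cells contains `p` and `q` respectively. -/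
def NoPairAt {X : Type*} [TopologicalSpace X] (CS : CellStructure X) (p q : X)
    (n : ℕ) : Prop :=
  ∀ Ex ∈ CS.cells n, ∀ Ey ∈ CS.cells n, p ∈ Ex → q ∈ Ey → ¬(Ex ∩ Ey).Nonempty

/-!
Let `A`, `B` be disjoint cells of levels at most `M`, joined by a cell chain. If some link has
level `< M + k`, that link alone weighs at least `α^{1-M-k}`. Otherwise enclose every link in an
ancestor of level `M + k`. None of these ancestors meets both `A` and `B`, so at the first link
whose ancestor misses `A` the chain splits into two chains, each joining disjoint cells of level
at most `M + k`. By induction on the length each weighs at least `α^{1-M-2k}`, and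
`2 α^{1-M-2k} ≥ α^{1-M-k}` because `α^k ≤ 2`.

This bounds `d_α(p, q)` from below as soon as no intersecting pair of `n`-cells contains `p` and
`q`. Such a level exists for distinct points: otherwise Kőnig's lemma yields nested intersecting
pairs of cells shrinking to `p` and to `q`, and by compactness their intersections share a point.
-/

open scoped Pointwise

section Konig

variable {β : Type*} {T : ℕ → Set β} {r : β → β → Prop}

theorem exists_path_of_forall_exists_rel (hr : ∀ n, ∀ b ∈ T (n + 1), ∃ a ∈ T n, r a b) (N : ℕ) :
    ∀ b ∈ T N, ∃ g : ℕ → β, g N = b ∧ ∀ n ≤ N, g n ∈ T n ∧ (n < N → r (g n) (g (n + 1))) := by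
  induction N with
  | zero => exact fun b hb => ⟨fun _ => b, rfl, fun n hn => by simp_all⟩
  | succ N ih =>
    intro b hb
    obtain ⟨a, ha, hab⟩ := hr N b hb
    obtain ⟨g, rfl, hg⟩ := ih a ha
    have hupdate : ∀ m ≤ N, Function.update g (N + 1) b m = g m := fun m hm =>
      Function.update_of_ne (by omega) _ _
    refine ⟨Function.update g (N + 1) b, by simp, fun n hn => ?_⟩
    rcases hn.lt_or_eq with hn | rfl
    · rw [hupdate n (by omega)]
      refine ⟨(hg n (by omega)).1, fun _ => ?_⟩
      rcases (Nat.lt_succ_iff.mp hn).lt_or_eq with hn' | rfl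
      · rw [hupdate _ hn']
        exact (hg n hn'.le).2 hn'
      · simpa using hab
    · simpa using hb

theorem exists_seq_forall_mem_and_rel (hfin : ∀ n, (T n).Finite) (hne : ∀ n, (T n).Nonempty)
    (hr : ∀ n, ∀ b ∈ T (n + 1), ∃ a ∈ T n, r a b) :
    ∃ f : ℕ → β, ∀ n, f n ∈ T n ∧ r (f n) (f (n + 1)) := by
  choose g _ hg using fun N => exists_path_of_forall_exists_rel hr N _ (hne N).some_mem
  -- An ultrafilter limit of the finite paths `g N` is coherent at every pair of levels.
  let U := Filter.hyperfilter ℕ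
  have hU : ∀ n, ∀ᶠ N in (U : Filter ℕ), n < N := fun n =>
    Filter.Eventually.filter_mono Filter.hyperfilter_le_cofinite
      (Nat.cofinite_eq_atTop ▸ Filter.eventually_gt_atTop n)
  have hlim : ∀ n, ∃ a ∈ T n, ∀ᶠ N in (U : Filter ℕ), g N n = a := by
    intro n
    have hmem : T n ∈ U.map (g · n) :=
      Ultrafilter.mem_map.mpr ((hU n).mono fun N hN => (hg N n hN.le).1)
    obtain ⟨a, ha, hUa⟩ := Ultrafilter.eq_pure_of_finite_mem (hfin n) hmem
    have hUa' : ({a} : Set β) ∈ U.map (g · n) := hUa ▸ Ultrafilter.mem_pure.mpr rfl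
    exact ⟨a, ha, Ultrafilter.mem_map.mp hUa'⟩
  choose f hfT hfU using hlim
  refine ⟨f, fun n => ⟨hfT n, ?_⟩⟩
  obtain ⟨N, hN, hN', hnN⟩ := ((hfU n).and ((hfU (n + 1)).and (hU n))).exists
  rw [← hN, ← hN']
  exact (hg N n hnN.le).2 hnN

end Konig

theorem List.exists_eq_append_cons_cons_of_head?_of_getLast? {β : Type*} {P : β → Prop} :
    ∀ {l : List β}, (∃ a, l.head? = some a ∧ P a) → (∃ b, l.getLast? = some b ∧ ¬P b) →
      ∃ l₁ a b l₂, l = l₁ ++ a :: b :: l₂ ∧ P a ∧ ¬P b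
  | [], ⟨_, h, _⟩, _ => by simp at h
  | [a], ⟨_, ha, hPa⟩, ⟨_, hb, hPb⟩ => by simp_all
  | a :: b :: l, ⟨_, ha, hPa⟩, hlast => by
    simp only [List.head?_cons, Option.some.injEq] at ha
    subst ha
    by_cases hPb : P b
    · rw [List.getLast?_cons_cons] at hlast
      obtain ⟨l₁, a', b', l₂, hl, hPa', hPb'⟩ :=
        exists_eq_append_cons_cons_of_head?_of_getLast? ⟨b, rfl, hPb⟩ hlast
      exact ⟨_ :: l₁, a', b', l₂, by rw [hl]; rfl, hPa', hPb'⟩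
    · exact ⟨[], _, b, l, rfl, hPa, hPb⟩

section Weights

variable {X : Type*} {α : ℝ}

theorem chainWeight_append (c₁ c₂ : List (ℕ × Set X)) :
    chainWeight α (c₁ ++ c₂) = chainWeight α c₁ + chainWeight α c₂ := by
  simp [chainWeight]

theorem chainWeight_reverse (c : List (ℕ × Set X)) : chainWeight α c.reverse = chainWeight α c := by
  simp [chainWeight, List.sum_reverse]

theorem chainWeight_nonneg (hα : 0 < α) (c : List (ℕ × Set X)) : 0 ≤ chainWeight α c :=
  List.sum_nonneg <| by
    simp only [List.mem_map]
    rintro _ ⟨e, -, rfl⟩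
    exact (zpow_pos hα _).le

theorem zpow_neg_le_chainWeight (hα : 0 < α) {c : List (ℕ × Set X)} {e : ℕ × Set X}
    (he : e ∈ c) : α ^ (-(e.1 : ℤ)) ≤ chainWeight α c :=
  List.single_le_sum (by simp only [List.mem_map]; rintro _ ⟨e, -, rfl⟩; exact (zpow_pos hα _).le)
    _ (List.mem_map_of_mem he)

theorem zpow_le_two_mul_zpow_add {k : ℕ} (hα : 0 < α) (hαk : α ^ k ≤ 2) (M : ℕ) :
    α ^ (1 - (M : ℤ) - k) ≤ 2 * α ^ (1 - ((M + k : ℕ) : ℤ) - k) := by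
  calc α ^ (1 - (M : ℤ) - k) = α ^ k * α ^ (1 - ((M + k : ℕ) : ℤ) - k) := by
        rw [← zpow_natCast, ← zpow_add₀ hα.ne']
        congr 1
        push_cast
        ring
    _ ≤ 2 * α ^ (1 - ((M + k : ℕ) : ℤ) - k) := by gcongr

end Weights

namespace CellStructure

variable {X : Type*} [TopologicalSpace X] (CS : CellStructure X)

theorem exists_mem_cell_subset {m n : ℕ} (hmn : m ≤ n) {E : Set X} (hE : E ∈ CS.cells m)
    {x : X} (hx : x ∈ E) : ∃ E' ∈ CS.cells n, x ∈ E' ∧ E' ⊆ E := by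
  induction n, hmn using Nat.le_induction with
  | base => exact ⟨E, hE, hx, subset_rfl⟩
  | succ n _ ih =>
    obtain ⟨E', hE', hxE', hE'E⟩ := ih
    rw [CS.eq_sUnion_children n E' hE'] at hxE'
    obtain ⟨E'', ⟨hE'', hE''E'⟩, hxE''⟩ := hxE'
    exact ⟨E'', hE'', hxE'', hE''E'.trans hE'E⟩

theorem exists_mem_cell (n : ℕ) (x : X) : ∃ E ∈ CS.cells n, x ∈ E := by
  obtain ⟨E, hE, hx, -⟩ :=
    CS.exists_mem_cell_subset (Nat.zero_le n) (E := univ) (by simp [CS.root]) (mem_univ x)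
  exact ⟨E, hE, hx⟩

theorem exists_superset_cell {m n : ℕ} (hmn : m ≤ n) {E : Set X} (hE : E ∈ CS.cells n) :
    ∃ F ∈ CS.cells m, E ⊆ F := by
  induction n, hmn using Nat.le_induction generalizing E with
  | base => exact ⟨E, hE, subset_rfl⟩
  | succ n _ ih =>
    obtain ⟨E', hE', hEE'⟩ := CS.exists_parent n E hE
    obtain ⟨F, hF, hE'F⟩ := ih hE'
    exact ⟨F, hF, hEE'.trans hE'F⟩

def SeparatedAtDepth (k : ℕ) : Prop :=
  ∀ n : ℕ, ∀ E₁ ∈ CS.cells n, ∀ E₂ ∈ CS.cells n, Disjoint E₁ E₂ →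
    ∀ F ∈ CS.cells (n + k), ¬((E₁ ∩ F).Nonempty ∧ (E₂ ∩ F).Nonempty)

variable {CS}

theorem SeparatedAtDepth.disjoint_of_inter_nonempty {k : ℕ} (hk : CS.SeparatedAtDepth k)
    {u v : ℕ} {A B F : Set X} (hA : A ∈ CS.cells u) (hB : B ∈ CS.cells v) (hAB : Disjoint A B)
    (hF : F ∈ CS.cells (max u v + k)) (hFA : (F ∩ A).Nonempty) : Disjoint F B := by
  rw [Set.disjoint_iff_inter_eq_empty, ← Set.not_nonempty_iff_eq_empty]
  rintro ⟨y, hyF, hyB⟩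
  obtain ⟨x, hxF, hxA⟩ := hFA
  obtain ⟨A', hA', hxA', hA'A⟩ := CS.exists_mem_cell_subset (le_max_left u v) hA hxA
  obtain ⟨B', hB', hyB', hB'B⟩ := CS.exists_mem_cell_subset (le_max_right u v) hB hyB
  exact hk _ A' hA' B' hB' (hAB.mono hA'A hB'B) F hF ⟨⟨x, hxA', hxF⟩, ⟨y, hyB', hyF⟩⟩

end CellStructure

section CellChains

open CellStructure

variable {X : Type*} [TopologicalSpace X] {CS : CellStructure X} {α : ℝ}

section Chains

variable {p q x y z : X} {c c₁ c₂ : List (ℕ × Set X)}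

theorem IsCellChain.singleton {m : ℕ} {E : Set X} (hE : E ∈ CS.cells m) (hp : p ∈ E)
    (hq : q ∈ E) : IsCellChain CS p q [(m, E)] :=
  ⟨List.cons_ne_nil _ _, by simpa using hE, ⟨_, rfl, hp⟩, ⟨_, rfl, hq⟩, List.isChain_singleton _⟩

theorem IsCellChain.reverse (h : IsCellChain CS p q c) : IsCellChain CS q p c.reverse := by
  obtain ⟨hne, hcells, ⟨e₀, he₀, hpe₀⟩, ⟨e₁, he₁, hqe₁⟩, hchain⟩ := h
  refine ⟨by simpa using hne, fun e he => hcells e (List.mem_reverse.mp he),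
    ⟨e₁, by rwa [List.head?_reverse], hqe₁⟩, ⟨e₀, by rwa [List.getLast?_reverse], hpe₀⟩, ?_⟩
  exact List.isChain_reverse.mpr (hchain.imp fun a b hab => by rwa [Set.inter_comm])

theorem IsCellChain.append (h₁ : IsCellChain CS x y c₁) (h₂ : IsCellChain CS y z c₂) :
    IsCellChain CS x z (c₁ ++ c₂) := by
  obtain ⟨hne₁, hcells₁, ⟨e₀, he₀, hxe₀⟩, ⟨e₁, he₁, hye₁⟩, hchain₁⟩ := h₁
  obtain ⟨hne₂, hcells₂, ⟨f₀, hf₀, hyf₀⟩, ⟨f₁, hf₁, hzf₁⟩, hchain₂⟩ := h₂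
  refine ⟨by simp [hne₁], fun e he => (List.mem_append.mp he).elim (hcells₁ e) (hcells₂ e),
    ⟨e₀, by simp [List.head?_append, he₀], hxe₀⟩,
    ⟨f₁, by rw [List.getLast?_append_of_ne_nil _ hne₂, hf₁], hzf₁⟩, ?_⟩
  refine List.isChain_append.mpr ⟨hchain₁, hchain₂, ?_⟩
  simp only [he₁, hf₀, Option.mem_def, Option.some.injEq]
  rintro _ rfl _ rfl
  exact ⟨y, hye₁, hyf₀⟩

theorem IsCellChain.exists_split {e₁ e₂ : ℕ × Set X}
    (h : IsCellChain CS x y (c₁ ++ e₁ :: e₂ :: c₂)) :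
    ∃ z ∈ e₁.2 ∩ e₂.2, IsCellChain CS x z (c₁ ++ [e₁]) ∧ IsCellChain CS z y (e₂ :: c₂) := by
  obtain ⟨-, hcells, ⟨e₀, he₀, hxe₀⟩, ⟨e₃, he₃, hye₃⟩, hchain⟩ := h
  obtain ⟨hchain₁, ⟨z, hz⟩, hchain₂⟩ := List.isChain_append_cons_cons.mp hchain
  have hcells₁ : ∀ e ∈ c₁ ++ [e₁], e.2 ∈ CS.cells e.1 := fun e he =>
    hcells e (by simp only [List.mem_append, List.mem_cons] at he ⊢; tauto)
  have hcells₂ : ∀ e ∈ e₂ :: c₂, e.2 ∈ CS.cells e.1 := fun e he =>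
    hcells e (by simp only [List.mem_append, List.mem_cons] at he ⊢; tauto)
  refine ⟨z, hz, ⟨by simp, hcells₁, ⟨e₀, ?_, hxe₀⟩, ⟨e₁, by simp, hz.1⟩, hchain₁⟩,
    ⟨by simp, hcells₂, ⟨e₂, rfl, hz.2⟩, ⟨e₃, ?_, hye₃⟩, hchain₂⟩⟩
  · cases c₁ <;> simp_all
  · simpa [List.getLast?_append] using he₃

end Chains

theorem IsCellChain.zpow_le_chainWeight {k : ℕ} (hα : 1 < α) (hαk : α ^ k ≤ 2)
    (hk : CS.SeparatedAtDepth k) {u v : ℕ} {A B : Set X} (hA : A ∈ CS.cells u)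
    (hB : B ∈ CS.cells v) (hAB : Disjoint A B) {x y : X} (hx : x ∈ A) (hy : y ∈ B)
    {c : List (ℕ × Set X)} (hc : IsCellChain CS x y c) :
    α ^ (1 - (max u v : ℕ) - k : ℤ) ≤ chainWeight α c := by
  have hα₀ : 0 < α := zero_lt_one.trans hα
  set N := max u v + k
  by_cases hshallow : ∃ e ∈ c, e.1 < N
  · obtain ⟨e, he, heN⟩ := hshallow
    exact (zpow_le_zpow_right₀ hα.le (by omega)).trans (zpow_neg_le_chainWeight hα₀ he)
  push Not at hshallow
  have hanc : ∀ e ∈ c, ∃ F ∈ CS.cells N, e.2 ⊆ F := fun e he =>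
    CS.exists_superset_cell (hshallow e he) (hc.2.1 e he)
  obtain ⟨c₁, e₁, e₂, c₂, hc_eq, ⟨F₁, hF₁, he₁F₁, hF₁A⟩, hmiss⟩ :=
    List.exists_eq_append_cons_cons_of_head?_of_getLast?
      (P := fun e : ℕ × Set X => ∃ F ∈ CS.cells N, e.2 ⊆ F ∧ (F ∩ A).Nonempty)
      (by
        obtain ⟨e, he, hxe⟩ := hc.2.2.1
        obtain ⟨F, hF, heF⟩ := hanc e (List.mem_of_mem_head? he)
        exact ⟨e, he, F, hF, heF, x, heF hxe, hx⟩)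
      (by
        obtain ⟨e, he, hye⟩ := hc.2.2.2.1
        refine ⟨e, he, fun ⟨F, hF, heF, hFA⟩ => ?_⟩
        exact Set.disjoint_left.mp (hk.disjoint_of_inter_nonempty hA hB hAB hF hFA) (heF hye) hy)
  obtain ⟨F₂, hF₂, he₂F₂⟩ := hanc e₂ (by simp [hc_eq])
  have hAF₂ : Disjoint A F₂ :=
    Set.disjoint_left.mpr fun w hwA hwF₂ => hmiss ⟨F₂, hF₂, he₂F₂, w, hwF₂, hwA⟩
  have hF₁B := hk.disjoint_of_inter_nonempty hA hB hAB hF₁ hF₁A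
  obtain ⟨z, ⟨hz₁, hz₂⟩, hc₁, hc₂⟩ := (hc_eq ▸ hc).exists_split
  have h₁ := hc₁.zpow_le_chainWeight hα hαk hk hA hF₂ hAF₂ hx (he₂F₂ hz₂)
  have h₂ := hc₂.zpow_le_chainWeight hα hαk hk hF₁ hB hF₁B (he₁F₁ hz₁) hy
  rw [Nat.max_eq_right (by omega)] at h₁
  rw [Nat.max_eq_left (by omega)] at h₂
  rw [hc_eq, show c₁ ++ e₁ :: e₂ :: c₂ = (c₁ ++ [e₁]) ++ e₂ :: c₂ by simp, chainWeight_append]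
  linarith [zpow_le_two_mul_zpow_add hα₀ hαk (max u v)]
termination_by c.length
decreasing_by
  all_goals simp only [hc_eq, List.length_append, List.length_cons, List.length_nil]; omega

section Distance

variable {p q : X}

theorem dAlpha_eq_sInf_image :
    dAlpha CS α p q = sInf (chainWeight α '' {c | IsCellChain CS p q c}) :=
  rfl

theorem chainWeight_image_nonempty : (chainWeight α '' {c | IsCellChain CS p q c}).Nonempty :=
  ⟨_, _, IsCellChain.singleton (by rw [CS.root]; rfl) (mem_univ p) (mem_univ q), rfl⟩

theorem chainWeight_image_bddBelow (hα : 0 < α) :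
    BddBelow (chainWeight α '' {c | IsCellChain CS p q c}) :=
  ⟨0, by rintro _ ⟨c, -, rfl⟩; exact chainWeight_nonneg hα c⟩

theorem dAlpha_le_chainWeight (hα : 0 < α) {c : List (ℕ × Set X)} (hc : IsCellChain CS p q c) :
    dAlpha CS α p q ≤ chainWeight α c :=
  csInf_le (chainWeight_image_bddBelow hα) (mem_image_of_mem _ hc)

theorem le_dAlpha {a : ℝ} (h : ∀ c, IsCellChain CS p q c → a ≤ chainWeight α c) :
    a ≤ dAlpha CS α p q :=
  le_csInf chainWeight_image_nonempty (forall_mem_image.mpr h)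

theorem dAlpha_nonneg (hα : 0 < α) (p q : X) : 0 ≤ dAlpha CS α p q :=
  le_dAlpha fun c _ => chainWeight_nonneg hα c

theorem dAlpha_self (hα : 1 < α) (p : X) : dAlpha CS α p p = 0 := by
  have hα₀ : 0 < α := zero_lt_one.trans hα
  refine le_antisymm (ge_of_tendsto' (tendsto_pow_atTop_nhds_zero_of_lt_one (inv_nonneg.mpr hα₀.le)
    (inv_lt_one_of_one_lt₀ hα)) fun m => ?_) (dAlpha_nonneg hα₀ p p)
  obtain ⟨E, hE, hpE⟩ := CS.exists_mem_cell m p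
  simpa [chainWeight] using dAlpha_le_chainWeight hα₀ (IsCellChain.singleton hE hpE hpE)

theorem dAlpha_comm (p q : X) : dAlpha CS α p q = dAlpha CS α q p := by
  have hsub : ∀ x y : X, chainWeight α '' {c | IsCellChain CS x y c} ⊆
      chainWeight α '' {c | IsCellChain CS y x c} := by
    rintro x y _ ⟨c, hc, rfl⟩
    exact ⟨c.reverse, hc.reverse, chainWeight_reverse c⟩
  rw [dAlpha_eq_sInf_image, (hsub p q).antisymm (hsub q p), dAlpha_eq_sInf_image]

theorem dAlpha_triangle (hα : 0 < α) (x y z : X) :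
    dAlpha CS α x z ≤ dAlpha CS α x y + dAlpha CS α y z := by
  rw [dAlpha_eq_sInf_image, dAlpha_eq_sInf_image, dAlpha_eq_sInf_image,
    ← csInf_add chainWeight_image_nonempty (chainWeight_image_bddBelow hα)
      chainWeight_image_nonempty (chainWeight_image_bddBelow hα)]
  refine csInf_le_csInf (chainWeight_image_bddBelow hα)
    (chainWeight_image_nonempty.add chainWeight_image_nonempty) ?_
  rintro _ ⟨_, ⟨c₁, hc₁, rfl⟩, _, ⟨c₂, hc₂, rfl⟩, rfl⟩
  exact ⟨c₁ ++ c₂, hc₁.append hc₂, chainWeight_append c₁ c₂⟩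

theorem zpow_le_dAlpha_of_noPairAt {k : ℕ} (hα : 1 < α) (hαk : α ^ k ≤ 2)
    (hk : CS.SeparatedAtDepth k) {n : ℕ} (h : NoPairAt CS p q n) :
    α ^ (1 - (n : ℤ) - k) ≤ dAlpha CS α p q := le_dAlpha fun c hc => by
  obtain ⟨A, hA, hpA⟩ := CS.exists_mem_cell n p
  obtain ⟨B, hB, hqB⟩ := CS.exists_mem_cell n q
  have hAB : Disjoint A B := Set.disjoint_iff_inter_eq_empty.mpr <|
    Set.not_nonempty_iff_eq_empty.mp (h A hA B hB hpA hqB)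
  simpa using hc.zpow_le_chainWeight hα hαk hk hA hB hAB hpA hqB

end Distance

section Separation

variable [T2Space X] {p q : X}

theorem CellStructure.eq_of_nested_inter_nonempty {A B : ℕ → Set X}
    (hA : ∀ n, A n ∈ CS.cells n) (hB : ∀ n, B n ∈ CS.cells n)
    (hA_anti : ∀ n, A (n + 1) ⊆ A n) (hB_anti : ∀ n, B (n + 1) ⊆ B n)
    (hAB : ∀ n, (A n ∩ B n).Nonempty) (hp : ∀ n, p ∈ A n) (hq : ∀ n, q ∈ B n) : p = q := by
  have hcompact : ∀ n, IsCompact (A n ∩ B n) := fun n =>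
    (CS.isCompact_cells n _ (hA n)).inter_right (CS.isCompact_cells n _ (hB n)).isClosed
  obtain ⟨z, hz⟩ := IsCompact.nonempty_iInter_of_sequence_nonempty_isCompact_isClosed
    (fun n => A n ∩ B n) (fun n => inter_subset_inter (hA_anti n) (hB_anti n)) hAB (hcompact 0)
    fun n => (hcompact n).isClosed
  obtain ⟨p', hp'⟩ := CS.descending_singleton A hA hA_anti
  obtain ⟨q', hq'⟩ := CS.descending_singleton B hB hB_anti
  have hA' : ∀ w, (∀ n, w ∈ A n) → w = p' := fun w hw => by
    rw [← mem_singleton_iff, ← hp']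
    exact mem_iInter.mpr hw
  have hB' : ∀ w, (∀ n, w ∈ B n) → w = q' := fun w hw => by
    rw [← mem_singleton_iff, ← hq']
    exact mem_iInter.mpr hw
  have hz' := mem_iInter.mp hz
  calc p = p' := hA' p hp
    _ = z := (hA' z fun n => (hz' n).1).symm
    _ = q' := hB' z fun n => (hz' n).2
    _ = q := (hB' q hq).symm

theorem CellStructure.exists_noPairAt_of_ne (CS : CellStructure X) (hpq : p ≠ q) :
    ∃ n, NoPairAt CS p q n := by
  by_contra! h
  let T : ℕ → Set (Set X × Set X) := fun n =>
    {P | P.1 ∈ CS.cells n ∧ P.2 ∈ CS.cells n ∧ p ∈ P.1 ∧ q ∈ P.2 ∧ (P.1 ∩ P.2).Nonempty}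
  have hfin : ∀ n, (T n).Finite := fun n =>
    ((CS.finite_cells n).prod (CS.finite_cells n)).subset fun P hP => ⟨hP.1, hP.2.1⟩
  have hne : ∀ n, (T n).Nonempty := fun n => by
    obtain ⟨A, hA, B, hB, hpA, hqB, hAB⟩ : ∃ A ∈ CS.cells n, ∃ B ∈ CS.cells n,
        p ∈ A ∧ q ∈ B ∧ (A ∩ B).Nonempty := by simpa [NoPairAt] using h n
    exact ⟨(A, B), hA, hB, hpA, hqB, hAB⟩
  have hparent : ∀ n, ∀ P ∈ T (n + 1), ∃ Q ∈ T n, P.1 ⊆ Q.1 ∧ P.2 ⊆ Q.2 := by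
    rintro n P ⟨hP₁, hP₂, hp, hq, hP⟩
    obtain ⟨Q₁, hQ₁, hPQ₁⟩ := CS.exists_parent n P.1 hP₁
    obtain ⟨Q₂, hQ₂, hPQ₂⟩ := CS.exists_parent n P.2 hP₂
    exact ⟨(Q₁, Q₂), ⟨hQ₁, hQ₂, hPQ₁ hp, hPQ₂ hq, hP.mono (inter_subset_inter hPQ₁ hPQ₂)⟩,
      hPQ₁, hPQ₂⟩
  obtain ⟨f, hf⟩ := exists_seq_forall_mem_and_rel hfin hne hparent
  exact hpq <| CS.eq_of_nested_inter_nonempty (fun n => (hf n).1.1) (fun n => (hf n).1.2.1)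
    (fun n => (hf n).2.1) (fun n => (hf n).2.2) (fun n => (hf n).1.2.2.2.2)
    (fun n => (hf n).1.2.2.1) (fun n => (hf n).1.2.2.2.1)

end Separation

end CellChains

theorem stmt6_general {X : Type*} [TopologicalSpace X]
    [TopologicalSpace.MetrizableSpace X] (CS : CellStructure X) (k : ℕ)
    (hk : ∀ n : ℕ, ∀ E₁ ∈ CS.cells n, ∀ E₂ ∈ CS.cells n, Disjoint E₁ E₂ →
      ∀ F ∈ CS.cells (n + k), ¬((E₁ ∩ F).Nonempty ∧ (E₂ ∩ F).Nonempty))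
    (α : ℝ) (hα₁ : 1 < α) (hα₂ : α ≤ (3 / 2 : ℝ) ^ ((k : ℝ))⁻¹) :
    IsMetricOn (dAlpha CS α) ∧
      ∀ p q : X, p ≠ q → ∀ n : ℕ, NoPairAt CS p q n → (∀ m : ℕ, m < n → ¬NoPairAt CS p q m) →
        α ^ (1 - (n : ℤ) - (k : ℤ)) ≤ dAlpha CS α p q := by
  have hα₀ : 0 < α := zero_lt_one.trans hα₁
  have hαk : α ^ k ≤ 2 := by
    rcases Nat.eq_zero_or_pos k with rfl | hk₀
    · norm_num
    · calc α ^ k ≤ ((3 / 2 : ℝ) ^ ((k : ℝ))⁻¹) ^ k := pow_le_pow_left₀ hα₀.le hα₂ k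
        _ = 3 / 2 := Real.rpow_inv_natCast_pow (by norm_num) hk₀.ne'
        _ ≤ 2 := by norm_num
  have hbound : ∀ {p q : X} {n : ℕ}, NoPairAt CS p q n →
      α ^ (1 - (n : ℤ) - (k : ℤ)) ≤ dAlpha CS α p q :=
    zpow_le_dAlpha_of_noPairAt hα₁ hαk hk
  refine ⟨⟨dAlpha_nonneg hα₀, fun p q => ⟨fun hpq => ?_, ?_⟩, dAlpha_comm,
    dAlpha_triangle hα₀⟩, fun p q _ n hn _ => hbound hn⟩
  · by_contra hne
    obtain ⟨n, hn⟩ := CS.exists_noPairAt_of_ne hne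
    exact (zpow_pos hα₀ _).not_ge (hpq ▸ hbound hn)
  · rintro rfl
    exact dAlpha_self hα₁ p

/-- If no two disjoint `n`-cells meet a common `(n+k)`-cell and
`1 < α ≤ (3/2)^{1/k}`, then `d_α` is a metric on `X`, and `d_α(p,q) ≥ α^{1-P(p,q)-k}`
for distinct `p, q`, where `P(p,q)` is the least level `n` admitting no intersecting
pair of `n`-cells containing `p` and `q`. -/
theorem stmt6 {X : Type*} [TopologicalSpace X] [CompactSpace X] [ConnectedSpace X]
    [TopologicalSpace.MetrizableSpace X] (CS : CellStructure X) (k : ℕ)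
    (hk : ∀ n : ℕ, ∀ E₁ ∈ CS.cells n, ∀ E₂ ∈ CS.cells n, Disjoint E₁ E₂ →
      ∀ F ∈ CS.cells (n + k), ¬((E₁ ∩ F).Nonempty ∧ (E₂ ∩ F).Nonempty))
    (α : ℝ) (hα₁ : 1 < α) (hα₂ : α ≤ (3 / 2 : ℝ) ^ ((k : ℝ))⁻¹) :
    IsMetricOn (dAlpha CS α) ∧
      ∀ p q : X, p ≠ q → ∀ n : ℕ, NoPairAt CS p q n → (∀ m : ℕ, m < n → ¬NoPairAt CS p q m) →
        α ^ (1 - (n : ℤ) - (k : ℤ)) ≤ dAlpha CS α p q :=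
  stmt6_general CS k hk α hα₁ hα₂
end
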